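/- Key inequality in the proof of sample-level pruning. Let o_x be an imputed object with instances x₁,…,x_n in d-dimensional Euclidean space and nonnegative probabilities p₁,…,p_n with Σ_l p_l = 1, and let o_y be an imputed object with instances y₁,…,y_m and nonnegative probabilities q₁,…,q_m with Σ_g q_g = 1. Let S_x ⊆ {1,…,n} and S_y ⊆ {1,…,m} be index subsets, and set β_x = Σ_{l ∈ S_x} p_l and β_y = Σ_{g ∈ S_y} q_g. If dist(x_l, y_g) > ε for every l ∈ S_x and every g ∈ S_y, then Pr_Join(o_x, o_y, ε) ≤ 1 − β_x · β_y. -/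

import Mathlib

/-! The join probability is the mass of the joining pairs under the product distribution
`p ⊗ q`. No pair in `Sx ×ˢ Sy` joins, and that rectangle has mass `β_x β_y`, so the
joining pairs carry at most `1 - β_x β_y`. -/

open Finset

theorem Finset.sum_mul_ite_le_sum_sub_sum_of_forall_not {ι R : Type*} [Fintype ι] [DecidableEq ι]
    [Ring R] [PartialOrder R] [IsOrderedAddMonoid R] (f : ι → R) (hf : ∀ i, 0 ≤ f i)
    (P : ι → Prop) [DecidablePred P] (S : Finset ι) (hS : ∀ i ∈ S, ¬ P i) :
    ∑ i, f i * (if P i then (1 : R) else 0) ≤ ∑ i, f i - ∑ i ∈ S, f i := by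
  have hPS : univ.filter P ⊆ Sᶜ := fun i hi =>
    mem_compl.2 fun hiS => hS i hiS (mem_filter.1 hi).2
  calc ∑ i, f i * (if P i then (1 : R) else 0) = ∑ i ∈ univ.filter P, f i := by
        simp only [mul_ite, mul_one, mul_zero, sum_ite, sum_const_zero, add_zero]
    _ ≤ ∑ i ∈ Sᶜ, f i := sum_le_sum_of_subset_of_nonneg hPS fun i _ _ => hf i
    _ = ∑ i, f i - ∑ i ∈ S, f i := by rw [← sum_compl_add_sum S f, add_sub_cancel_right]

theorem sample_level_key_inequality_general
    (d n m : ℕ)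
    (x : Fin n → EuclideanSpace ℝ (Fin d)) (p : Fin n → ℝ)
    (y : Fin m → EuclideanSpace ℝ (Fin d)) (q : Fin m → ℝ)
    (hp : ∀ l, 0 ≤ p l) (hps : ∑ l, p l = 1)
    (hq : ∀ g, 0 ≤ q g) (hqs : ∑ g, q g = 1)
    (Sx : Finset (Fin n)) (Sy : Finset (Fin m))
    (ε : ℝ)
    (hsep : ∀ l ∈ Sx, ∀ g ∈ Sy, ε < dist (x l) (y g)) :
    (∑ l, ∑ g, p l * q g * (if dist (x l) (y g) ≤ ε then (1 : ℝ) else 0)) ≤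
      1 - (∑ l ∈ Sx, p l) * (∑ g ∈ Sy, q g) := by
  rw [← Fintype.sum_prod_type']
  calc _ ≤ ∑ lg : Fin n × Fin m, p lg.1 * q lg.2 - ∑ lg ∈ Sx ×ˢ Sy, p lg.1 * q lg.2 :=
        sum_mul_ite_le_sum_sub_sum_of_forall_not _ (fun lg => mul_nonneg (hp lg.1) (hq lg.2)) _ _
          fun lg hlg => not_le.2 (hsep _ (mem_product.1 hlg).1 _ (mem_product.1 hlg).2)
    _ = 1 - (∑ l ∈ Sx, p l) * (∑ g ∈ Sy, q g) := by
        rw [Fintype.sum_prod_type, sum_product, ← sum_mul_sum, ← sum_mul_sum, hps, hqs, one_mul]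

/-- key inequality in the proof of sample-level pruning: if all pairs of
instances indexed by `S_x × S_y` are more than `ε` apart, then the join probability is
at most `1 - β_x · β_y` where `β_x = Σ_{l ∈ S_x} p_l` and `β_y = Σ_{g ∈ S_y} q_g`. -/
theorem sample_level_key_inequality
    (d n m : ℕ)
    (x : Fin n → EuclideanSpace ℝ (Fin d)) (p : Fin n → ℝ)
    (y : Fin m → EuclideanSpace ℝ (Fin d)) (q : Fin m → ℝ)
    (hp : ∀ l, 0 ≤ p l) (hps : ∑ l, p l = 1)
    (hq : ∀ g, 0 ≤ q g) (hqs : ∑ g, q g = 1)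
    (Sx : Finset (Fin n)) (Sy : Finset (Fin m))
    (ε : ℝ) (hε : 0 ≤ ε)
    (hsep : ∀ l ∈ Sx, ∀ g ∈ Sy, ε < dist (x l) (y g)) :
    (∑ l, ∑ g, p l * q g * (if dist (x l) (y g) ≤ ε then (1 : ℝ) else 0)) ≤
      1 - (∑ l ∈ Sx, p l) * (∑ g ∈ Sy, q g) :=
  sample_level_key_inequality_general d n m x p y q hp hps hq hqs Sx Sy ε hsep
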